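/- Let f(u) = ∑_j [p_j uᵀv_j - y_j log(uᵀv_j)] and g(u; ū) = uᵀ(∑_j p_j v_j) - ∑_j y_j ∑_r β_r^{(j)} log(u_r v_{j,r} / β_r^{(j)}), where β_r^{(j)} = ū_r v_{j,r}/(ūᵀv_j), with all p_j ≥ 0, y_j ≥ 0, and all vectors having strictly positive entries. Then g(u; ū) ≥ f(u) for all u with positive entries, and g(ū; ū) = f(ū). -/
import Mathlib


/-- The Jensen surrogate g majorizes f: g(u; ū) ≥ f(u) for all positive u, and
g(ū; ū) = f(ū). -/
theorem surrogate_majorizes (R J : ℕ) (p y : Fin J → ℝ) (v : Fin J → Fin R → ℝ)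
    (ubar : Fin R → ℝ) (hp : ∀ j, 0 ≤ p j) (hy : ∀ j, 0 ≤ y j)
    (hv : ∀ j r, 0 < v j r) (hubar : ∀ r, 0 < ubar r) :
    let beta := fun (j : Fin J) (r : Fin R) => ubar r * v j r / (∑ s, ubar s * v j s)
    let f := fun u : Fin R → ℝ =>
      ∑ j, (p j * (∑ r, u r * v j r) - y j * Real.log (∑ r, u r * v j r))
    let g := fun u : Fin R → ℝ =>
      (∑ r, u r * (∑ j, p j * v j r)) -
        ∑ j, y j * ∑ r, beta j r * Real.log (u r * v j r / beta j r)
    (∀ u : Fin R → ℝ, (∀ r, 0 < u r) → f u ≤ g u) ∧ g ubar = f ubar := by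
  intro beta f g
  rcases Nat.eq_zero_or_pos R with hR | hR
  · subst hR
    constructor
    · intro u hu
      simp [f, g, Real.log_zero]
    · simp [f, g, Real.log_zero]
  · haveI : Nonempty (Fin R) := Fin.pos_iff_nonempty.mp hR
    have hS : ∀ j, 0 < ∑ s, ubar s * v j s := fun j =>
      Finset.sum_pos (fun s _ => mul_pos (hubar s) (hv j s)) Finset.univ_nonempty
    have hβpos : ∀ j r, 0 < beta j r := fun j r =>
      div_pos (mul_pos (hubar r) (hv j r)) (hS j)
    have hβsum : ∀ j, ∑ r, beta j r = 1 := by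
      intro j
      simp only [beta]
      rw [← Finset.sum_div, div_self (hS j).ne']
    have swap : ∀ u : Fin R → ℝ,
        (∑ r, u r * (∑ j, p j * v j r)) = ∑ j, p j * (∑ r, u r * v j r) := by
      intro u
      simp_rw [Finset.mul_sum]
      rw [Finset.sum_comm]
      exact Finset.sum_congr rfl fun j _ => Finset.sum_congr rfl fun r _ => by ring
    constructor
    · intro u hu
      have jensen : ∀ j, ∑ r, beta j r * Real.log (u r * v j r / beta j r)
          ≤ Real.log (∑ r, u r * v j r) := by
        intro j
        have h := (strictConcaveOn_log_Ioi.concaveOn).le_map_sum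
          (t := Finset.univ) (w := beta j) (p := fun r => u r * v j r / beta j r)
          (fun r _ => (hβpos j r).le) (hβsum j)
          (fun r _ => Set.mem_Ioi.mpr (div_pos (mul_pos (hu r) (hv j r)) (hβpos j r)))
        have e : ∑ r, beta j r • (u r * v j r / beta j r) = ∑ r, u r * v j r := by
          refine Finset.sum_congr rfl fun r _ => ?_
          rw [smul_eq_mul, mul_div_cancel₀ _ (hβpos j r).ne']
        rw [e] at h
        simpa [smul_eq_mul] using h
      have hsum : ∑ j, y j * ∑ r, beta j r * Real.log (u r * v j r / beta j r)
          ≤ ∑ j, y j * Real.log (∑ r, u r * v j r) :=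
        Finset.sum_le_sum fun j _ => mul_le_mul_of_nonneg_left (jensen j) (hy j)
      simp only [f, g, swap u]
      rw [Finset.sum_sub_distrib]
      linarith
    · have eq1 : ∀ j r, ubar r * v j r / beta j r = ∑ s, ubar s * v j s := by
        intro j r
        have ha : ubar r * v j r ≠ 0 := (mul_pos (hubar r) (hv j r)).ne'
        simp only [beta]
        rw [div_div_eq_mul_div, mul_comm, mul_div_assoc, div_self ha, mul_one]
      have eq2 : ∀ j, ∑ r, beta j r * Real.log (ubar r * v j r / beta j r)
          = Real.log (∑ s, ubar s * v j s) := by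
        intro j
        simp_rw [eq1 j]
        rw [← Finset.sum_mul, hβsum j, one_mul]
      simp only [f, g, swap ubar]
      rw [Finset.sum_sub_distrib]
      congr 1
      exact Finset.sum_congr rfl fun j _ => by rw [eq2 j]
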